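/- arXiv:1705.05295 — 2 statements merged into one kernel-verified Lean document; each statement's English description precedes it below -/
import Mathlib

section
/- Let T1 and T2 be trees on the same label set 𝒳. If there is an LPR sequence L = (x1, …, xk) turning T1 into T2, then for any i ∈ [k] there is an LPR sequence L' = (x1', …, xk') turning T1 into T2 such that x1' = xi and {x1, …, xk} = {x1', …, xk'}. -/
/-!
Common framework: rooted binary trees with leaves bijectively labeled by a
finite label set, leaf removal, restriction, the leaf-removal distance `d_LR`,
compatibility, leaf-disagreements, triplets, LPR moves, etc.
-/

universe u

/-- A rooted binary tree whose leaves carry labels from `α`. -/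
inductive LTree (α : Type u) : Type u where
  | leaf : α → LTree α
  | node : LTree α → LTree α → LTree α

namespace LTree

variable {α : Type u} [DecidableEq α]

/-- The set of leaf labels of a tree. -/
def labels : LTree α → Finset α
  | leaf a => {a}
  | node l r => labels l ∪ labels r

/-- A tree is `Good` when its leaves carry pairwise distinct labels
(i.e. the leaves are bijectively labeled). -/
def Good : LTree α → Prop
  | leaf _ => True
  | node l r => Good l ∧ Good r ∧ Disjoint (labels l) (labels r)

/-- `T` is a (rooted binary, uniquely leaf-labeled) tree on label set `𝒳`. -/
def IsTreeOn (T : LTree α) (𝒳 : Finset α) : Prop :=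
  Good T ∧ labels T = 𝒳

/-- Equality of rooted trees: children of a node are unordered. -/
inductive Iso : LTree α → LTree α → Prop
  | leaf (a : α) : Iso (leaf a) (leaf a)
  | node {l₁ r₁ l₂ r₂ : LTree α} :
      Iso l₁ l₂ → Iso r₁ r₂ → Iso (node l₁ r₁) (node l₂ r₂)
  | swap {l₁ r₁ l₂ r₂ : LTree α} :
      Iso l₁ r₂ → Iso r₁ l₂ → Iso (node l₁ r₁) (node l₂ r₂)

/-- Equality of possibly empty trees (`none` is the empty tree). -/
def OptIso : Option (LTree α) → Option (LTree α) → Prop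
  | none, none => True
  | some t₁, some t₂ => Iso t₁ t₂
  | _, _ => False

/-- Restriction `T|_S`: keep exactly the leaves with labels in `S`, suppressing
the resulting degree-two vertices and degree-one roots; the result is `none`
when no leaf survives. -/
def restrict : LTree α → Finset α → Option (LTree α)
  | leaf a, S => if a ∈ S then some (leaf a) else none
  | node l r, S =>
    match restrict l S, restrict r S with
    | some l', some r' => some (node l' r')
    | some l', none => some l'
    | none, some r' => some r'
    | none, none => none

/-- `T − X`: remove from `T` every leaf whose label lies in `X`. -/
def remove (T : LTree α) (X : Finset α) : Option (LTree α) :=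
  restrict T (labels T \ X)

/-- The leaf-removal distance `d_LR(T₁,T₂)`: the minimum number of labels
whose removal makes the two trees equal. -/
noncomputable def dLR (T₁ T₂ : LTree α) : ℕ :=
  sInf {n | ∃ X : Finset α, X ⊆ labels T₁ ∪ labels T₂ ∧ X.card = n ∧
    OptIso (remove T₁ X) (remove T₂ X)}

def labelsO : Option (LTree α) → Finset α
  | none => ∅
  | some t => labels t

def GoodO : Option (LTree α) → Prop
  | none => True
  | some t => Good t

def restrictO : Option (LTree α) → Finset α → Option (LTree α)
  | none, _ => none
  | some t, S => restrict t S

/-- A family of (possibly empty) trees is compatible if there is a single tree,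
on the union of their label sets, which displays all of them. -/
def CompatibleFamO {ι : Type*} (f : ι → Option (LTree α)) : Prop :=
  ∃ TO : Option (LTree α), GoodO TO ∧
    (↑(labelsO TO) : Set α) = (⋃ i, ↑(labelsO (f i))) ∧
    ∀ i, OptIso (restrictO TO (labelsO (f i))) (f i)

/-- A family of trees is compatible if a single tree displays all of them. -/
def CompatibleFam {ι : Type*} (𝒯 : ι → LTree α) : Prop :=
  CompatibleFamO fun i => some (𝒯 i)

/-- `X` is a leaf-disagreement for the family `𝒯`: removing `X i` from `𝒯 i`
yields a compatible family. -/
def IsLeafDisagreement {ι : Type*} (𝒯 : ι → LTree α) (X : ι → Finset α) : Prop :=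
  CompatibleFamO fun i => remove (𝒯 i) (X i)

/-- `X'` is a label-disagreement for the family `𝒯`. -/
def IsLabelDisagreement {ι : Type*} (𝒯 : ι → LTree α) (X' : Finset α) : Prop :=
  CompatibleFamO fun i => remove (𝒯 i) X'

/-- `MASTRL 𝒯`: the minimum size of a leaf-disagreement for `𝒯`. -/
noncomputable def MASTRL {t : ℕ} (𝒯 : Fin t → LTree α) : ℕ :=
  sInf {v | ∃ X : Fin t → Finset α, (∀ i, X i ⊆ labels (𝒯 i)) ∧
    (∑ i, (X i).card) = v ∧ IsLeafDisagreement 𝒯 X}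

/-- The triplet `ab|c` (as a tree). -/
def tripletTree (a b c : α) : LTree α := node (node (leaf a) (leaf b)) (leaf c)

/-- A rooted triplet: a tree with exactly three (distinctly labeled) leaves. -/
def IsTriplet (R : LTree α) : Prop := Good R ∧ (labels R).card = 3

/-- `ab|c` is a triplet of `T`, i.e. `T|_{a,b,c} = ab|c`. -/
def IsTripletOf (T : LTree α) (a b c : α) : Prop :=
  OptIso (restrict T {a, b, c}) (some (tripletTree a b c))

/-- `tr(T)`: the triplet decomposition of `T`. -/
def trSet (T : LTree α) : Set (LTree α) :=
  {R | ∃ a b c : α, R = tripletTree a b c ∧ IsTripletOf T a b c}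

/-- A set of trees is compatible: some tree on the union of the label sets
displays every member. -/
def CompatibleSet (S : Set (LTree α)) : Prop :=
  ∃ TO : Option (LTree α), GoodO TO ∧
    (↑(labelsO TO) : Set α) = (⋃ R ∈ S, ↑(labels R)) ∧
    ∀ R ∈ S, OptIso (restrictO TO (labels R)) (some R)

/-- `MINRTI ℛ`: the minimum number of triplets to delete from `ℛ` so that the
remaining triplets are compatible. -/
noncomputable def MINRTI {t : ℕ} (R : Fin t → LTree α) : ℕ :=
  sInf {m | ∃ s : Finset (Fin t), s.card = m ∧
    CompatibleFam (fun i : {i : Fin t // i ∉ s} => R i.1)}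

/-- Graft the leaf `x` at the position (edge) addressed by `p` in `T`.
The empty address grafts `x` above the root of `T` (the `⊥` case); the address
of an internal/leaf vertex `v` grafts `x` on the edge between `v` and its
parent.  `none` when the address is invalid. -/
def graftAt (x : α) : LTree α → List Bool → Option (LTree α)
  | T, [] => some (node (leaf x) T)
  | leaf _, _ :: _ => none
  | node l r, b :: p =>
    if b then (graftAt x l p).map (fun l' => node l' r)
    else (graftAt x r p).map (fun r' => node l r')

/-- `T'` is obtained from `T` by a single LPR (leaf prune-and-regraft) move on
the leaf `x`: prune `x` from `T` and regraft it, either on an edge of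
`T − {x}` or above its root. -/
def LPRStep (x : α) (T T' : LTree α) : Prop :=
  (remove T {x} = none ∧ T' = leaf x) ∨
  ∃ T₀ p, remove T {x} = some T₀ ∧ graftAt x T₀ p = some T'

/-- `TurnsInto L T T'`: the LPR sequence with (ordered) leaf list `L` turns
`T` into `T'`. -/
inductive TurnsInto : List α → LTree α → LTree α → Prop
  | nil {T T' : LTree α} : Iso T T' → TurnsInto [] T T'
  | cons {x : α} {xs : List α} {T T'' T' : LTree α} :
      LPRStep x T T'' → TurnsInto xs T'' T' → TurnsInto (x :: xs) T T'

/-- `confset(T₁,T₂)`: the collection of 3-label sets `{a,b,c}` such that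
`T₁` contains a triplet on `{a,b,c}` conflicting with a triplet of `T₂`. -/
def confset (T₁ T₂ : LTree α) : Set (Finset α) :=
  {s | ∃ a b c : α, s = {a, b, c} ∧ IsTripletOf T₁ a b c ∧
    (IsTripletOf T₂ a c b ∨ IsTripletOf T₂ b c a)}

/-- `X` is a minimal disagreement between `T₁` and `T₂`. -/
def MinimalDisagreement (T₁ T₂ : LTree α) (X : Finset α) : Prop :=
  X ⊆ labels T₁ ∪ labels T₂ ∧
  OptIso (remove T₁ X) (remove T₂ X) ∧
  ∀ X' ⊂ X, ¬ OptIso (remove T₁ X') (remove T₂ X')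

/-- `u` is (the rooted subtree hanging at) a node of `T`. -/
inductive IsSubtree : LTree α → LTree α → Prop
  | refl (T : LTree α) : IsSubtree T T
  | left {u l r : LTree α} : IsSubtree u l → IsSubtree u (node l r)
  | right {u l r : LTree α} : IsSubtree u r → IsSubtree u (node l r)

/-- `u` is the least common ancestor in `T` of the labels in `Z`. -/
def IsLCA (T : LTree α) (Z : Finset α) (u : LTree α) : Prop :=
  IsSubtree u T ∧ Z ⊆ labels u ∧
    ∀ w, IsSubtree w T → Z ⊆ labels w → IsSubtree u w

end LTree

open LTree

/-!
An LPR sequence turns `T₁` into `T₂` exactly when the two trees agree once all the labels it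
moves are removed. One direction holds because a move on `x` does not change the tree with `x`
removed. Conversely, if `T₁` and `T₂` agree after removing `X ∪ {x}`, then regrafting `x` in
`T₁` at the place it occupies in `T₂ − X` makes them agree after removing `X` alone; inducting
along the sequence, the last occurrence of each label does the real work and earlier ones are
arbitrary. So whether a sequence works depends only on its set of labels, and any reordering of
it, in particular one starting with `xᵢ`, works too.
-/

namespace LTree

section Iso

variable {α : Type*}

theorem Iso.refl : ∀ T : LTree α, Iso T T
  | .leaf a => .leaf a
  | .node l r => .node (Iso.refl l) (Iso.refl r)

theorem Iso.trans {T S R : LTree α} (h₁ : Iso T S) (h₂ : Iso S R) : Iso T R := by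
  induction h₁ generalizing R with
  | leaf a => exact h₂
  | node _ _ ih₁ ih₂ =>
    cases h₂ with
    | node k₁ k₂ => exact .node (ih₁ k₁) (ih₂ k₂)
    | swap k₁ k₂ => exact .swap (ih₁ k₁) (ih₂ k₂)
  | swap _ _ ih₁ ih₂ =>
    cases h₂ with
    | node k₁ k₂ => exact .swap (ih₁ k₂) (ih₂ k₁)
    | swap k₁ k₂ => exact .node (ih₁ k₂) (ih₂ k₁)

theorem OptIso.refl : ∀ o : Option (LTree α), OptIso o o
  | none => trivial
  | some T => Iso.refl T

@[simp]
theorem graftAt_nil (x : α) (T : LTree α) : graftAt x T [] = some (node (leaf x) T) := by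
  cases T <;> rfl

theorem graftAt_node_true (x : α) (l r : LTree α) (p : List Bool) :
    graftAt x (node l r) (true :: p) = (graftAt x l p).map (node · r) := rfl

theorem graftAt_node_false (x : α) (l r : LTree α) (p : List Bool) :
    graftAt x (node l r) (false :: p) = (graftAt x r p).map (node l ·) := rfl

theorem Iso.exists_graftAt {x : α} {U V : LTree α} (h : Iso U V) :
    ∀ {p : List Bool} {D : LTree α}, graftAt x V p = some D →
      ∃ q D', graftAt x U q = some D' ∧ Iso D' D := by
  induction h with
  | leaf a =>
    rintro (_ | ⟨b, p⟩) D hD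
    · cases hD
      exact ⟨[], _, graftAt_nil _ _, .refl _⟩
    · cases hD
  | node h₁ h₂ ih₁ ih₂ =>
    rintro (_ | ⟨_ | _, p⟩) D hD
    · cases hD
      exact ⟨[], _, graftAt_nil _ _, .node (.leaf x) (.node h₁ h₂)⟩
    · obtain ⟨d, hd, rfl⟩ := Option.map_eq_some_iff.mp hD
      obtain ⟨q, D', hq, hiso⟩ := ih₂ hd
      exact ⟨false :: q, _, by rw [graftAt_node_false, hq]; rfl, .node h₁ hiso⟩
    · obtain ⟨d, hd, rfl⟩ := Option.map_eq_some_iff.mp hD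
      obtain ⟨q, D', hq, hiso⟩ := ih₁ hd
      exact ⟨true :: q, _, by rw [graftAt_node_true, hq]; rfl, .node hiso h₂⟩
  | swap h₁ h₂ ih₁ ih₂ =>
    rintro (_ | ⟨_ | _, p⟩) D hD
    · cases hD
      exact ⟨[], _, graftAt_nil _ _, .node (.leaf x) (.swap h₁ h₂)⟩
    · obtain ⟨d, hd, rfl⟩ := Option.map_eq_some_iff.mp hD
      obtain ⟨q, D', hq, hiso⟩ := ih₁ hd
      exact ⟨true :: q, _, by rw [graftAt_node_true, hq]; rfl, .swap hiso h₂⟩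
    · obtain ⟨d, hd, rfl⟩ := Option.map_eq_some_iff.mp hD
      obtain ⟨q, D', hq, hiso⟩ := ih₂ hd
      exact ⟨false :: q, _, by rw [graftAt_node_false, hq]; rfl, .swap h₁ hiso⟩

end Iso

variable {α : Type*} [DecidableEq α]

theorem labels_nonempty : ∀ T : LTree α, (labels T).Nonempty
  | leaf a => ⟨a, Finset.mem_singleton_self a⟩
  | node l _ => (labels_nonempty l).mono Finset.subset_union_left

theorem Iso.labels_eq {T S : LTree α} (h : Iso T S) : labels T = labels S := by
  induction h with
  | leaf a => rfl
  | node _ _ ih₁ ih₂ => simp only [labels, ih₁, ih₂]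
  | swap _ _ ih₁ ih₂ => simp only [labels, ih₁, ih₂, Finset.union_comm]

theorem eq_leaf_of_labels_subset {T : LTree α} {x : α} (hT : Good T) (h : labels T ⊆ {x}) :
    T = leaf x := by
  cases T with
  | leaf a => rw [Finset.mem_singleton.mp (h (Finset.mem_singleton_self a))]
  | node l r =>
    obtain ⟨-, -, hd⟩ := hT
    obtain ⟨a, ha⟩ := labels_nonempty l
    obtain ⟨b, hb⟩ := labels_nonempty r
    have hab : a = b := by
      rw [Finset.mem_singleton.mp (h (Finset.mem_union_left _ ha)),
        Finset.mem_singleton.mp (h (Finset.mem_union_right _ hb))]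
    exact absurd (hab ▸ hb) (Finset.disjoint_left.mp hd ha)

theorem restrict_node (l r : LTree α) (S : Finset α) :
    restrict (node l r) S =
      match restrict l S, restrict r S with
      | some l', some r' => some (node l' r')
      | some l', none => some l'
      | none, some r' => some r'
      | none, none => none := rfl

theorem restrict_congr {T : LTree α} {S S' : Finset α} (h : ∀ a ∈ labels T, a ∈ S ↔ a ∈ S') :
    restrict T S = restrict T S' := by
  induction T with
  | leaf a => simp only [restrict, h a (Finset.mem_singleton_self a)]
  | node l r ihl ihr =>
    rw [restrict_node, restrict_node,
      ihl fun a ha => h a (Finset.mem_union_left _ ha),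
      ihr fun a ha => h a (Finset.mem_union_right _ ha)]

theorem restrict_insert_of_notMem {T : LTree α} {x : α} (hx : x ∉ labels T) (S : Finset α) :
    restrict T (insert x S) = restrict T S :=
  restrict_congr fun a ha => by
    rw [Finset.mem_insert, or_iff_right (ne_of_mem_of_not_mem ha hx)]

theorem restrict_eq_none {T : LTree α} {S : Finset α} :
    restrict T S = none ↔ Disjoint (labels T) S := by
  induction T with
  | leaf a => by_cases h : a ∈ S <;> simp [restrict, labels, h]
  | node l r ihl ihr =>
    rw [labels, Finset.disjoint_union_left, ← ihl, ← ihr, restrict_node]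
    cases restrict l S <;> cases restrict r S <;> simp

theorem restrict_of_subset {T : LTree α} {S : Finset α} (h : labels T ⊆ S) :
    restrict T S = some T := by
  induction T with
  | leaf a => simp [restrict, h (Finset.mem_singleton_self a)]
  | node l r ihl ihr =>
    rw [restrict_node, ihl (Finset.union_subset_left h), ihr (Finset.union_subset_right h)]

theorem labels_restrict {T t : LTree α} {S : Finset α} (h : restrict T S = some t) :
    labels t = labels T ∩ S := by
  induction T generalizing t with
  | leaf a =>
    by_cases ha : a ∈ S
    · simp only [restrict, if_pos ha, Option.some.injEq] at h
      simp [← h, labels, ha]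
    · simp [restrict, ha] at h
  | node l r ihl ihr =>
    rw [labels, Finset.union_inter_distrib_right]
    rw [restrict_node] at h
    have hnone {u : LTree α} (hu : restrict u S = none) : labels u ∩ S = ∅ :=
      Finset.disjoint_iff_inter_eq_empty.mp (restrict_eq_none.mp hu)
    cases hl : restrict l S <;> cases hr : restrict r S <;> simp only [hl, hr] at h <;> cases h
    · rw [hnone hl, ihr hr, Finset.empty_union]
    · rw [hnone hr, ihl hl, Finset.union_empty]
    · rw [labels, ihl hl, ihr hr]

theorem Good.restrict {T t : LTree α} {S : Finset α} (hT : Good T)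
    (h : restrict T S = some t) : Good t := by
  induction T generalizing t with
  | leaf a =>
    by_cases ha : a ∈ S <;> simp [LTree.restrict, ha] at h
    exact h ▸ trivial
  | node l r ihl ihr =>
    obtain ⟨gl, gr, hd⟩ := hT
    rw [restrict_node] at h
    cases hl : LTree.restrict l S <;> cases hr : LTree.restrict r S <;> simp only [hl, hr] at h <;>
      cases h
    · exact ihr gr hr
    · exact ihl gl hl
    · refine ⟨ihl gl hl, ihr gr hr, hd.mono ?_ ?_⟩ <;>
        simp only [labels_restrict hl, labels_restrict hr, Finset.inter_subset_left]

theorem restrict_restrict (T : LTree α) (A B : Finset α) :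
    (restrict T A).bind (restrict · B) = restrict T (A ∩ B) := by
  induction T with
  | leaf a => by_cases hA : a ∈ A <;> by_cases hB : a ∈ B <;> simp [restrict, hA, hB]
  | node l r ihl ihr =>
    rw [restrict_node _ _ (A ∩ B), ← ihl, ← ihr, restrict_node]
    cases restrict l A <;> cases restrict r A <;>
      simp only [Option.bind_none, Option.bind_some, restrict_node] <;> split <;> simp_all

theorem Iso.optIso_restrict {T S : LTree α} (h : Iso T S) (X : Finset α) :
    OptIso (restrict T X) (restrict S X) := by
  induction h with
  | leaf a => exact OptIso.refl _
  | node _ _ ih₁ ih₂ | swap _ _ ih₁ ih₂ =>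
    rw [restrict_node, restrict_node]
    revert ih₁ ih₂
    cases restrict _ X <;> cases restrict _ X <;> cases restrict _ X <;> cases restrict _ X <;>
      simp_all [OptIso, Iso.node, Iso.swap]

theorem labels_remove {T t : LTree α} {X : Finset α} (h : remove T X = some t) :
    labels t = labels T \ X := by
  rw [labels_restrict h, Finset.inter_eq_right.mpr Finset.sdiff_subset]

theorem remove_eq_none {T : LTree α} {X : Finset α} : remove T X = none ↔ labels T ⊆ X := by
  simp [remove, restrict_eq_none, Finset.disjoint_left, Finset.subset_iff]

theorem restrict_sdiff_of_labels_subset {T : LTree α} {A : Finset α} (hA : labels T ⊆ A)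
    (X : Finset α) : restrict T (A \ X) = remove T X :=
  restrict_congr fun a ha => by simp [Finset.mem_sdiff, ha, hA ha]

theorem remove_remove {T t : LTree α} {X : Finset α} (h : remove T X = some t) (Y : Finset α) :
    remove t Y = remove T (X ∪ Y) := by
  have := restrict_restrict T (labels T \ X) (labels t \ Y)
  rw [show restrict T (labels T \ X) = some t from h, Option.bind_some] at this
  rw [remove, this, remove, labels_remove h]
  congr 1
  ext a
  simp only [Finset.mem_inter, Finset.mem_sdiff, Finset.mem_union]
  tauto

theorem Iso.optIso_remove {T S : LTree α} (h : Iso T S) (X : Finset α) :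
    OptIso (remove T X) (remove S X) := by
  rw [remove, remove, h.labels_eq]
  exact h.optIso_restrict _

theorem remove_eq_some_leaf {T : LTree α} {X : Finset α} {x : α} (hT : Good T)
    (h : labels T \ X = {x}) : remove T X = some (leaf x) := by
  have hne : remove T X ≠ none := by
    rw [Ne, remove_eq_none, ← Finset.sdiff_eq_empty_iff_subset, h]
    exact Finset.singleton_ne_empty x
  obtain ⟨t, ht⟩ := Option.ne_none_iff_exists'.mp hne
  rw [ht, eq_leaf_of_labels_subset (hT.restrict ht) (labels_remove ht ▸ h.subset)]

theorem remove_node (l r : LTree α) (X : Finset α) :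
    remove (node l r) X =
      match remove l X, remove r X with
      | some l', some r' => some (node l' r')
      | some l', none => some l'
      | none, some r' => some r'
      | none, none => none := by
  rw [remove, restrict_node, labels, restrict_sdiff_of_labels_subset Finset.subset_union_left,
    restrict_sdiff_of_labels_subset Finset.subset_union_right]

theorem remove_singleton_of_notMem {T : LTree α} {x : α} (hx : x ∉ labels T) :
    remove T {x} = some T := by
  rw [remove, Finset.sdiff_singleton_eq_erase, Finset.erase_eq_of_notMem hx,
    restrict_of_subset subset_rfl]

theorem labels_graftAt {x : α} {T T' : LTree α} {p : List Bool} (h : graftAt x T p = some T') :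
    labels T' = insert x (labels T) := by
  induction T generalizing T' p with
  | leaf a =>
    cases p with
    | nil => cases h; rfl
    | cons b p => cases h
  | node l r ihl ihr =>
    rcases p with _ | ⟨_ | _, p⟩
    · cases h; rfl
    · obtain ⟨u, hu, rfl⟩ := Option.map_eq_some_iff.mp h
      rw [labels, labels, ihr hu, Finset.union_insert]
    · obtain ⟨u, hu, rfl⟩ := Option.map_eq_some_iff.mp h
      rw [labels, labels, ihl hu, Finset.insert_union]

theorem Good.graftAt {x : α} {T T' : LTree α} {p : List Bool} (hT : Good T)
    (hx : x ∉ labels T) (h : LTree.graftAt x T p = some T') : Good T' := by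
  induction T generalizing T' p with
  | leaf a =>
    cases p with
    | nil => cases h; exact ⟨trivial, trivial, Finset.disjoint_singleton_left.mpr hx⟩
    | cons b p => cases h
  | node l r ihl ihr =>
    obtain ⟨gl, gr, hd⟩ := hT
    rw [labels, Finset.mem_union, not_or] at hx
    rcases p with _ | ⟨_ | _, p⟩
    · cases h
      exact ⟨trivial, ⟨gl, gr, hd⟩, Finset.disjoint_singleton_left.mpr (by simp [labels, hx])⟩
    · obtain ⟨u, hu, rfl⟩ := Option.map_eq_some_iff.mp h
      refine ⟨gl, ihr gr hx.2 hu, ?_⟩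
      rw [labels_graftAt hu, Finset.disjoint_insert_right]
      exact ⟨hx.1, hd⟩
    · obtain ⟨u, hu, rfl⟩ := Option.map_eq_some_iff.mp h
      refine ⟨ihl gl hx.1 hu, gr, ?_⟩
      rw [labels_graftAt hu, Finset.disjoint_insert_left]
      exact ⟨hx.2, hd⟩

theorem restrict_graftAt_of_notMem {x : α} {S : Finset α} (hx : x ∉ S) {T T' : LTree α}
    {p : List Bool} (h : graftAt x T p = some T') : restrict T' S = restrict T S := by
  induction T generalizing T' p with
  | leaf a =>
    cases p with
    | nil => cases h; by_cases ha : a ∈ S <;> simp [restrict, hx, ha]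
    | cons b p => cases h
  | node l r ihl ihr =>
    rcases p with _ | ⟨_ | _, p⟩
    · cases h
      rw [restrict_node, show restrict (leaf x) S = none by simp [restrict, hx]]
      cases restrict (node l r) S <;> rfl
    · obtain ⟨u, hu, rfl⟩ := Option.map_eq_some_iff.mp h
      rw [restrict_node, restrict_node, ihr hu]
    · obtain ⟨u, hu, rfl⟩ := Option.map_eq_some_iff.mp h
      rw [restrict_node, restrict_node, ihl hu]

theorem exists_graftAt_of_restrict {x : α} {S : Finset α} {U C D : LTree α} {p : List Bool}
    (hx : x ∉ labels U) (hC : restrict U S = some C) (hD : graftAt x C p = some D) :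
    ∃ q E, graftAt x U q = some E ∧ restrict E (insert x S) = some D := by
  induction U generalizing C D p with
  | leaf a =>
    by_cases ha : a ∈ S <;> simp only [restrict, ha, if_true, if_false] at hC <;> cases hC
    cases p with
    | nil => cases hD; exact ⟨[], _, graftAt_nil _ _, by simp [restrict, ha]⟩
    | cons b p => cases hD
  | node u₁ u₂ ih₁ ih₂ =>
    rw [labels, Finset.mem_union, not_or] at hx
    have e₁ := restrict_insert_of_notMem hx.1 S
    have e₂ := restrict_insert_of_notMem hx.2 S
    rw [restrict_node] at hC
    cases h₁ : restrict u₁ S <;> cases h₂ : restrict u₂ S <;> simp only [h₁, h₂] at hC <;>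
      cases hC
    · obtain ⟨q, E, hq, hE⟩ := ih₂ hx.2 h₂ hD
      exact ⟨false :: q, node u₁ E, by rw [graftAt_node_false, hq]; rfl,
        by rw [restrict_node, e₁, h₁, hE]⟩
    · obtain ⟨q, E, hq, hE⟩ := ih₁ hx.1 h₁ hD
      exact ⟨true :: q, node E u₂, by rw [graftAt_node_true, hq]; rfl,
        by rw [restrict_node, e₂, h₂, hE]⟩
    · rcases p with _ | ⟨_ | _, p⟩
      · cases hD
        refine ⟨[], _, graftAt_nil _ _, ?_⟩
        rw [restrict_node, restrict_node, e₁, e₂, h₁, h₂]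
        simp [restrict]
      · obtain ⟨d, hd, rfl⟩ := Option.map_eq_some_iff.mp hD
        obtain ⟨q, E, hq, hE⟩ := ih₂ hx.2 h₂ hd
        exact ⟨false :: q, node u₁ E, by rw [graftAt_node_false, hq]; rfl,
          by rw [restrict_node, e₁, h₁, hE]⟩
      · obtain ⟨d, hd, rfl⟩ := Option.map_eq_some_iff.mp hD
        obtain ⟨q, E, hq, hE⟩ := ih₁ hx.1 h₁ hd
        exact ⟨true :: q, node E u₂, by rw [graftAt_node_true, hq]; rfl,
          by rw [restrict_node, e₂, h₂, hE]⟩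

theorem eq_leaf_or_exists_graftAt_remove {x : α} {V : LTree α} (hV : Good V)
    (hx : x ∈ labels V) :
    V = leaf x ∨ ∃ V₀ p V', remove V {x} = some V₀ ∧ graftAt x V₀ p = some V' ∧ Iso V' V := by
  induction V with
  | leaf a => exact Or.inl (by rw [Finset.mem_singleton.mp hx])
  | node l r ihl ihr =>
    obtain ⟨gl, gr, hd⟩ := hV
    have hleaf : remove (leaf x) {x} = none := remove_eq_none.mpr subset_rfl
    right
    rw [remove_node]
    rcases Finset.mem_union.mp hx with hxl | hxr
    · rw [remove_singleton_of_notMem (Finset.disjoint_left.mp hd hxl)]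
      rcases ihl gl hxl with rfl | ⟨l₀, p, l', h₀, hp, hl'⟩
      · rw [hleaf]
        exact ⟨r, [], _, rfl, graftAt_nil _ _, .refl _⟩
      · rw [h₀]
        exact ⟨node l₀ r, true :: p, _, rfl, by rw [graftAt_node_true, hp]; rfl,
          .node hl' (.refl r)⟩
    · rw [remove_singleton_of_notMem (Finset.disjoint_right.mp hd hxr)]
      rcases ihr gr hxr with rfl | ⟨r₀, p, r', h₀, hp, hr'⟩
      · rw [hleaf]
        exact ⟨l, [], _, rfl, graftAt_nil _ _, .swap (.refl _) (.refl _)⟩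
      · rw [h₀]
        exact ⟨node l r₀, false :: p, _, rfl, by rw [graftAt_node_false, hp]; rfl,
          .node (.refl l) hr'⟩

theorem remove_empty (T : LTree α) : remove T ∅ = some T := by
  rw [remove, Finset.sdiff_empty, restrict_of_subset subset_rfl]

theorem exists_lprStep (x : α) (T : LTree α) : ∃ T', LPRStep x T T' := by
  cases h : remove T {x} with
  | none => exact ⟨leaf x, .inl ⟨h, rfl⟩⟩
  | some T₀ => exact ⟨_, .inr ⟨T₀, [], h, graftAt_nil _ _⟩⟩

namespace LPRStep

variable {x : α} {T T' : LTree α}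

theorem labels_eq (h : LPRStep x T T') : labels T' = insert x (labels T) := by
  rcases h with ⟨h₀, rfl⟩ | ⟨T₀, p, h₀, hp⟩
  · rw [(labels_nonempty T).subset_singleton_iff.mp (remove_eq_none.mp h₀),
      Finset.insert_eq_of_mem (Finset.mem_singleton_self x)]
    rfl
  · rw [labels_graftAt hp, labels_remove h₀]
    ext
    simp only [Finset.mem_insert, Finset.mem_sdiff, Finset.mem_singleton]
    tauto

theorem good (h : LPRStep x T T') (hT : Good T) : Good T' := by
  rcases h with ⟨-, rfl⟩ | ⟨T₀, p, h₀, hp⟩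
  · trivial
  · exact (hT.restrict h₀).graftAt (by simp [labels_remove h₀]) hp

theorem isTreeOn {𝒳 : Finset α} (h : LPRStep x T T') (hT : IsTreeOn T 𝒳) (hx : x ∈ 𝒳) :
    IsTreeOn T' 𝒳 :=
  ⟨h.good hT.1, by rw [h.labels_eq, hT.2, Finset.insert_eq_of_mem hx]⟩

theorem remove_eq {X : Finset α} (h : LPRStep x T T') (hx : x ∈ X) :
    remove T' X = remove T X := by
  rcases h with ⟨h₀, rfl⟩ | ⟨T₀, p, h₀, hp⟩
  · rw [remove_eq_none.mpr (Finset.singleton_subset_iff.mpr hx),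
      remove_eq_none.mpr ((remove_eq_none.mp h₀).trans (Finset.singleton_subset_iff.mpr hx))]
  · rw [remove, restrict_graftAt_of_notMem (fun h => (Finset.mem_sdiff.mp h).2 hx) hp,
      restrict_sdiff_of_labels_subset ((labels_graftAt hp).symm ▸ Finset.subset_insert _ _),
      remove_remove h₀, Finset.union_eq_right.mpr (Finset.singleton_subset_iff.mpr hx)]

end LPRStep

theorem TurnsInto.labels_eq {L : List α} {T T' : LTree α} (h : TurnsInto L T T') :
    labels T' = labels T ∪ L.toFinset := by
  induction h with
  | nil hi => rw [List.toFinset_nil, Finset.union_empty, hi.labels_eq]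
  | cons hstep _ ih =>
    rw [ih, hstep.labels_eq, List.toFinset_cons, Finset.insert_union, Finset.union_insert]

theorem TurnsInto.optIso_remove {L : List α} {T T' : LTree α} {X : Finset α}
    (h : TurnsInto L T T') (hX : L.toFinset ⊆ X) : OptIso (remove T X) (remove T' X) := by
  induction h with
  | nil hi => exact hi.optIso_remove X
  | cons hstep _ ih =>
    rw [List.toFinset_cons, Finset.insert_subset_iff] at hX
    rw [← hstep.remove_eq hX.1]
    exact ih hX.2

theorem exists_lprStep_optIso_remove {𝒳 X : Finset α} {x : α} {W V : LTree α}
    (hW : IsTreeOn W 𝒳) (hV : IsTreeOn V 𝒳) (hx : x ∈ 𝒳) (hxX : x ∉ X)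
    (h : OptIso (remove W (insert x X)) (remove V (insert x X))) :
    ∃ W', LPRStep x W W' ∧ OptIso (remove W' X) (remove V X) := by
  have hxV : x ∈ labels V \ X := Finset.mem_sdiff.mpr ⟨hV.2 ▸ hx, hxX⟩
  obtain ⟨V₁, hV₁⟩ := Option.ne_none_iff_exists'.mp fun hn =>
    (Finset.mem_sdiff.mp hxV).2 (remove_eq_none.mp hn (Finset.mem_sdiff.mp hxV).1)
  rcases eq_leaf_or_exists_graftAt_remove (hV.1.restrict hV₁) (labels_remove hV₁ ▸ hxV) with
    rfl | ⟨V₀, p, V', hV₀, hp, hV'⟩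
  · -- `V − X` is the single leaf `x`, so any move on `x` will do.
    obtain ⟨W', hW'⟩ := exists_lprStep x W
    refine ⟨W', hW', ?_⟩
    rw [hV₁, remove_eq_some_leaf (hW'.good hW.1)]
    · exact OptIso.refl _
    · rw [(hW'.isTreeOn hW hx).2, ← hV.2, ← labels_remove hV₁]
      rfl
  · -- Regraft `x` into `W − {x}` where it sits in `V − X`, transported along
    -- `W − (X ∪ {x}) ≅ V − (X ∪ {x})`.
    rw [remove_remove hV₁, Finset.union_comm, ← Finset.insert_eq] at hV₀
    rw [hV₀] at h
    obtain ⟨U, hU, hUV₀⟩ : ∃ U, remove W (insert x X) = some U ∧ Iso U V₀ := by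
      cases hU : remove W (insert x X) with
      | none => rw [hU] at h; exact h.elim
      | some U => rw [hU] at h; exact ⟨U, rfl, h⟩
    obtain ⟨W₀, hW₀⟩ := Option.ne_none_iff_exists'.mp fun hn => by
      rw [remove_eq_none.mpr ((remove_eq_none.mp hn).trans (Finset.singleton_subset_iff.mpr
        (Finset.mem_insert_self x X)))] at hU
      cases hU
    have hxW₀ : x ∉ labels W₀ := by simp [labels_remove hW₀]
    rw [Finset.insert_eq, ← remove_remove hW₀] at hU
    obtain ⟨q₀, D, hq₀, hD⟩ := hUV₀.exists_graftAt hp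
    obtain ⟨q, E, hq, hE⟩ := exists_graftAt_of_restrict hxW₀ hU hq₀
    refine ⟨E, .inr ⟨W₀, q, hW₀, hq⟩, ?_⟩
    rw [hV₁, remove, labels_graftAt hq, Finset.insert_sdiff_of_notMem _ hxX, hE]
    exact hD.trans hV'

theorem turnsInto_of_optIso_remove {𝒳 : Finset α} {V : LTree α} (hV : IsTreeOn V 𝒳) :
    ∀ {M : List α} {W : LTree α}, IsTreeOn W 𝒳 → M.toFinset ⊆ 𝒳 →
      OptIso (remove W M.toFinset) (remove V M.toFinset) → TurnsInto M W V
  | [], W, _, _, h => by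
    rw [List.toFinset_nil, remove_empty, remove_empty] at h
    exact .nil h
  | x :: M, W, hW, hM, h => by
    rw [List.toFinset_cons, Finset.insert_subset_iff] at hM
    rw [List.toFinset_cons] at h
    obtain ⟨W', hW', h'⟩ : ∃ W', LPRStep x W W' ∧
        OptIso (remove W' M.toFinset) (remove V M.toFinset) := by
      by_cases hxM : x ∈ M.toFinset
      · -- `x` is moved again later, so this move may be arbitrary.
        obtain ⟨W', hW'⟩ := exists_lprStep x W
        rw [Finset.insert_eq_of_mem hxM] at h
        exact ⟨W', hW', hW'.remove_eq hxM ▸ h⟩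
      · exact exists_lprStep_optIso_remove hW hV hM.1 hxM h
    exact .cons hW' (turnsInto_of_optIso_remove hV (hW'.isTreeOn hW hM.1) hM.2 h')

theorem TurnsInto.of_toFinset_eq {𝒳 : Finset α} {T T' : LTree α} {L L' : List α}
    (h : TurnsInto L T T') (hT : IsTreeOn T 𝒳) (hT' : IsTreeOn T' 𝒳)
    (hL : L'.toFinset = L.toFinset) : TurnsInto L' T T' := by
  have hL𝒳 : L.toFinset ⊆ 𝒳 := by
    rw [← hT'.2, h.labels_eq]
    exact Finset.subset_union_right
  exact turnsInto_of_optIso_remove hT' hT (hL ▸ hL𝒳) (hL ▸ h.optIso_remove subset_rfl)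

end LTree

/-- Lemma 13 of the paper.  If an LPR sequence
`L = (x₁,…,x_k)` turns `T₁` into `T₂`, then for any `i ∈ [k]` there is an LPR
sequence `L' = (x₁',…,x_k')` turning `T₁` into `T₂` with `x₁' = x_i` and
`{x₁,…,x_k} = {x₁',…,x_k'}`. -/
theorem lpr_sequence_reorder {α : Type u} [DecidableEq α] (𝒳 : Finset α)
    (T₁ T₂ : LTree α) (h₁ : IsTreeOn T₁ 𝒳) (h₂ : IsTreeOn T₂ 𝒳)
    (L : List α) (hL : TurnsInto L T₁ T₂) (i : Fin L.length) :
    ∃ L' : List α, TurnsInto L' T₁ T₂ ∧ L'.length = L.length ∧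
      L'.head? = some (L.get i) ∧ L'.toFinset = L.toFinset := by
  have hperm : (L.get i :: L.erase (L.get i)).Perm L :=
    (List.perm_cons_erase (L.get_mem i)).symm
  have hset := List.toFinset_eq_of_perm _ _ hperm
  exact ⟨_, hL.of_toFinset_eq h₁ h₂ hset, hperm.length_eq, rfl, hset⟩
end

section
/- Let T1, T2, T* be trees on the same label set 𝒳 and let d' ≤ d be nonnegative integers. Suppose that d < d_LR(T1, T2) ≤ d' + d, and that there are subsets X1, X2 ⊆ 𝒳 with T1 − X1 = T* − X1, T2 − X2 = T* − X2, |X1| ≤ d' and |X2| ≤ d. Then there is a minimal disagreement X between T1 and T2 of size at most d + d' and an element x ∈ X such that x ∈ X1 \ X2. -/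
/-!
Common framework: rooted binary trees with leaves bijectively labeled by a
finite label set, leaf removal, restriction, the leaf-removal distance `d_LR`,
compatibility, leaf-disagreements, triplets, LPR moves, etc.
-/

universe u

open LTree
namespace LTree

variable {α : Type u} [DecidableEq α]

omit [DecidableEq α] in
theorem Iso.symm' : ∀ {a b : LTree α}, Iso a b → Iso b a := by
  intro a b h
  induction h with
  | leaf a => exact .leaf a
  | node h1 h2 ih1 ih2 => exact .node ih1 ih2
  | swap h1 h2 ih1 ih2 => exact .swap ih2 ih1

omit [DecidableEq α] in
theorem Iso.trans' : ∀ {a b c : LTree α}, Iso a b → Iso b c → Iso a c := by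
  intro a b c h1
  induction h1 generalizing c with
  | leaf a => exact fun h => h
  | node h1 h2 ih1 ih2 =>
    intro h3
    cases h3 with
    | node g1 g2 => exact .node (ih1 g1) (ih2 g2)
    | swap g1 g2 => exact .swap (ih1 g1) (ih2 g2)
  | swap h1 h2 ih1 ih2 =>
    intro h3
    cases h3 with
    | node g1 g2 => exact .swap (ih1 g2) (ih2 g1)
    | swap g1 g2 => exact .node (ih1 g2) (ih2 g1)

omit [DecidableEq α] in
theorem OptIso.symm' {a b : Option (LTree α)} (h : OptIso a b) : OptIso b a := by
  cases a <;> cases b <;> simp only [OptIso] at * <;>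
    first | trivial | exact Iso.symm' h

omit [DecidableEq α] in
theorem OptIso.trans' {a b c : Option (LTree α)} (h1 : OptIso a b) (h2 : OptIso b c) :
    OptIso a c := by
  cases a <;> cases b <;> cases c <;> simp only [OptIso] at * <;>
    first | trivial | exact Iso.trans' h1 h2

theorem restrictO_restrict (T : LTree α) (S S' : Finset α) :
    restrictO (restrict T S) S' = restrict T (S ∩ S') := by
  induction T with
  | leaf a =>
    by_cases h : a ∈ S <;> by_cases h' : a ∈ S' <;>
      simp [restrict, restrictO, h, h', Finset.mem_inter]
  | node l r ihl ihr =>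
    rcases hl : restrict l S with _ | l' <;> rcases hr : restrict r S with _ | r' <;>
      rw [hl] at ihl <;> rw [hr] at ihr <;>
      simp only [restrictO] at ihl ihr
    · show restrictO (restrict (LTree.node l r) S) S' = restrict (LTree.node l r) (S ∩ S')
      simp only [restrict, hl, hr, ← ihl, ← ihr, restrictO]
    · show restrictO (restrict (LTree.node l r) S) S' = restrict (LTree.node l r) (S ∩ S')
      simp only [restrict, hl, hr, ← ihl, ← ihr, restrictO]
      cases restrict r' S' <;> rfl
    · show restrictO (restrict (LTree.node l r) S) S' = restrict (LTree.node l r) (S ∩ S')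
      simp only [restrict, hl, hr, ← ihl, ← ihr, restrictO]
      cases restrict l' S' <;> rfl
    · show restrictO (restrict (LTree.node l r) S) S' = restrict (LTree.node l r) (S ∩ S')
      simp only [restrict, hl, hr, ← ihl, ← ihr, restrictO]

theorem remove_union' (T : LTree α) (X Y : Finset α) :
    remove T (X ∪ Y) = restrictO (remove T X) (labels T \ (X ∪ Y)) := by
  rw [remove, remove, restrictO_restrict]
  congr 1
  ext a
  simp only [Finset.mem_sdiff, Finset.mem_inter, Finset.mem_union]
  tauto

theorem Iso.restrict' {t₁ t₂ : LTree α} (h : Iso t₁ t₂) (S : Finset α) :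
    OptIso (restrict t₁ S) (restrict t₂ S) := by
  induction h with
  | leaf a =>
    by_cases h : a ∈ S <;> simp only [restrict, h, if_true, if_false]
    · exact Iso.leaf a
    · trivial
  | node h1 h2 ih1 ih2 =>
    show OptIso (restrict (LTree.node _ _) S) (restrict (LTree.node _ _) S)
    simp only [restrict]
    rcases e1 : LTree.restrict _ S with _ | a <;> rcases e2 : LTree.restrict _ S with _ | b <;>
      rcases e3 : LTree.restrict _ S with _ | c <;> rcases e4 : LTree.restrict _ S with _ | d <;>
      rw [e1, e3] at ih1 <;> rw [e2, e4] at ih2 <;> first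
        | exact False.elim ih1 | exact False.elim ih2 | trivial
        | exact ih1 | exact ih2 | exact Iso.node ih1 ih2
  | swap h1 h2 ih1 ih2 =>
    show OptIso (restrict (LTree.node _ _) S) (restrict (LTree.node _ _) S)
    simp only [restrict]
    rcases e1 : LTree.restrict _ S with _ | a <;> rcases e2 : LTree.restrict _ S with _ | b <;>
      rcases e3 : LTree.restrict _ S with _ | c <;> rcases e4 : LTree.restrict _ S with _ | d <;>
      rw [e1, e4] at ih1 <;> rw [e2, e3] at ih2 <;> first
        | exact False.elim ih1 | exact False.elim ih2 | trivial
        | exact ih1 | exact ih2 | exact Iso.swap ih1 ih2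

theorem OptIso.restrictO' {t₁ t₂ : Option (LTree α)} (h : OptIso t₁ t₂) (S : Finset α) :
    OptIso (restrictO t₁ S) (restrictO t₂ S) := by
  cases t₁ <;> cases t₂
  · trivial
  · exact False.elim h
  · exact False.elim h
  · exact Iso.restrict' h S

theorem exists_minimal_sub (T₁ T₂ : LTree α) : ∀ Y : Finset α,
    Y ⊆ labels T₁ ∪ labels T₂ →
    OptIso (remove T₁ Y) (remove T₂ Y) →
    ∃ X ⊆ Y, MinimalDisagreement T₁ T₂ X := by
  intro Y
  induction Y using Finset.strongInduction with
  | _ Y ih =>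
    intro hsub hiso
    by_cases h : ∃ X' ⊂ Y, OptIso (remove T₁ X') (remove T₂ X')
    · obtain ⟨X', hX', hiso'⟩ := h
      obtain ⟨X, hXX', hmin⟩ := ih X' hX' (hX'.subset.trans hsub) hiso'
      exact ⟨X, hXX'.trans hX'.subset, hmin⟩
    · push_neg at h
      exact ⟨Y, subset_refl Y, hsub, hiso, h⟩

end LTree


/-- Lemma 15 of the paper.  Suppose `d < d_LR(T₁,T₂) ≤ d' + d`
with `d' ≤ d`, and there are a tree `T*` and subsets `X₁, X₂ ⊆ 𝒳` with
`T₁ − X₁ = T* − X₁`, `T₂ − X₂ = T* − X₂`, `|X₁| ≤ d'`, `|X₂| ≤ d`.  Then there is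
a minimal disagreement `X` between `T₁` and `T₂` of size at most `d + d'` and
some `x ∈ X` with `x ∈ X₁ \ X₂`. -/
theorem exists_minimal_disagreement_with_moved_leaf {α : Type u} [DecidableEq α]
    (𝒳 : Finset α) (T₁ T₂ Tstar : LTree α) (d d' : ℕ) (hdd : d' ≤ d)
    (h₁ : IsTreeOn T₁ 𝒳) (h₂ : IsTreeOn T₂ 𝒳) (hstar : IsTreeOn Tstar 𝒳)
    (hlow : d < dLR T₁ T₂) (hhigh : dLR T₁ T₂ ≤ d' + d)
    (X₁ X₂ : Finset α) (hX₁ : X₁ ⊆ 𝒳) (hX₂ : X₂ ⊆ 𝒳)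
    (e₁ : OptIso (remove T₁ X₁) (remove Tstar X₁))
    (e₂ : OptIso (remove T₂ X₂) (remove Tstar X₂))
    (hc₁ : X₁.card ≤ d') (hc₂ : X₂.card ≤ d) :
    ∃ X : Finset α, MinimalDisagreement T₁ T₂ X ∧ X.card ≤ d + d' ∧
      ∃ x ∈ X, x ∈ X₁ \ X₂ := by
  obtain ⟨g1, l1⟩ := h₁
  obtain ⟨g2, l2⟩ := h₂
  obtain ⟨gs, ls⟩ := hstar
  have key : OptIso (remove T₁ (X₁ ∪ X₂)) (remove T₂ (X₁ ∪ X₂)) := by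
    have h1' : OptIso (remove T₁ (X₁ ∪ X₂)) (remove Tstar (X₁ ∪ X₂)) := by
      rw [remove_union' T₁ X₁ X₂, remove_union' Tstar X₁ X₂, l1, ls]
      exact e₁.restrictO' _
    have h2' : OptIso (remove T₂ (X₁ ∪ X₂)) (remove Tstar (X₁ ∪ X₂)) := by
      rw [Finset.union_comm, remove_union' T₂ X₂ X₁, remove_union' Tstar X₂ X₁, l2, ls]
      exact e₂.restrictO' _
    exact h1'.trans' h2'.symm'
  have hsub : X₁ ∪ X₂ ⊆ labels T₁ ∪ labels T₂ := by
    rw [l1, l2]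
    exact (Finset.union_subset hX₁ hX₂).trans Finset.subset_union_left
  obtain ⟨X, hXsub, hmin⟩ := exists_minimal_sub T₁ T₂ (X₁ ∪ X₂) hsub key
  have hcard : X.card ≤ d + d' := by
    calc X.card ≤ (X₁ ∪ X₂).card := Finset.card_le_card hXsub
      _ ≤ X₁.card + X₂.card := Finset.card_union_le _ _
      _ ≤ d' + d := Nat.add_le_add hc₁ hc₂
      _ = d + d' := Nat.add_comm _ _
  have hdlr : dLR T₁ T₂ ≤ X.card :=
    Nat.sInf_le ⟨X, hmin.1, rfl, hmin.2.1⟩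
  refine ⟨X, hmin, hcard, ?_⟩
  by_contra hcon
  push_neg at hcon
  have hXsub2 : X ⊆ X₂ := by
    intro x hx
    rcases Finset.mem_union.mp (hXsub hx) with h | h
    · by_contra hx2
      exact hcon x hx (Finset.mem_sdiff.mpr ⟨h, hx2⟩)
    · exact h
  have : X.card ≤ d := (Finset.card_le_card hXsub2).trans hc₂
  omega
end
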